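/- arXiv:1410.0332 — 4 statements merged into one kernel-verified Lean document; each statement's English description precedes it below -/
import Mathlib

section
/- Let n > 1 and let k be an integer with 1 ≤ k < z_1(n). Then z_1(n − k) ≤ 2k. -/
/-- `IsZeck n l` says that `l` is the Zeckendorf representation of `n`, recorded as the
list of indices of the Fibonacci parts in increasing order: every index is at least `2`,
consecutive indices differ by at least `2` (no two consecutive Fibonacci numbers), and the
corresponding Fibonacci numbers sum to `n`.  The parts of the Zeckendorf representation in
increasing order are then `z₁(n) = Nat.fib l.headI`, `z₂(n) = Nat.fib (l.getD 1 0)`, etc. -/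
def IsZeck (n : ℕ) (l : List ℕ) : Prop :=
  (∀ i ∈ l, 2 ≤ i) ∧ l.Chain' (fun a b => a + 2 ≤ b) ∧ (l.map Nat.fib).sum = n

/-!
If `z₁(n - k) = fib b > 2k`, then `k < fib (b - 1)`, so the Zeckendorf representation of `k`
followed by that of `n - k` is still a Zeckendorf representation. By uniqueness it is the one
of `n`, whose smallest part is then at most `k`, contradicting `k < z₁(n)`.
-/

local instance : IsTrans ℕ fun a b => a + 2 ≤ b where
  trans _a _b _c hab hbc := hab.trans le_self_add |>.trans hbc

theorem isZeck_iff {n : ℕ} {l : List ℕ} :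
    IsZeck n l ↔ l.reverse.IsZeckendorfRep ∧ (l.map Nat.fib).sum = n := by
  rw [List.IsZeckendorfRep, ← List.reverse_cons, List.isChain_reverse,
    List.isChain_iff_pairwise, List.pairwise_cons, ← List.isChain_iff_pairwise, IsZeck]
  simp only [zero_add, and_assoc]
  rfl

theorem isZeck_reverse_zeckendorf (n : ℕ) : IsZeck n (Nat.zeckendorf n).reverse := by
  rw [isZeck_iff, List.reverse_reverse, List.map_reverse, List.sum_reverse]
  exact ⟨Nat.isZeckendorfRep_zeckendorf n, Nat.sum_zeckendorf_fib n⟩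

namespace IsZeck

variable {n : ℕ} {l : List ℕ}

theorem eq_reverse_zeckendorf (h : IsZeck n l) : l = (Nat.zeckendorf n).reverse := by
  obtain ⟨hrep, hsum⟩ := isZeck_iff.1 h
  have := Nat.zeckendorf_sum_fib hrep
  rw [List.map_reverse, List.sum_reverse, hsum] at this
  rw [this, List.reverse_reverse]

theorem unique {l' : List ℕ} (h : IsZeck n l) (h' : IsZeck n l') : l = l' :=
  h.eq_reverse_zeckendorf.trans h'.eq_reverse_zeckendorf.symm

theorem fib_le {i : ℕ} (h : IsZeck n l) (hi : i ∈ l) : Nat.fib i ≤ n :=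
  h.2.2 ▸ List.single_le_sum (fun _ _ => Nat.zero_le _) _ (List.mem_map_of_mem hi)

theorem fib_headI_le (h : IsZeck n l) : Nat.fib l.headI ≤ n := by
  cases l with
  | nil => exact Nat.zero_le n
  | cons a t => exact h.fib_le List.mem_cons_self

theorem ne_nil (h : IsZeck n l) (hn : n ≠ 0) : l ≠ [] := by
  rintro rfl
  exact hn h.2.2.symm

theorem two_le_headI (h : IsZeck n l) (hn : n ≠ 0) : 2 ≤ l.headI := by
  cases l with
  | nil => exact absurd rfl (h.ne_nil hn)
  | cons a t => exact h.1 a List.mem_cons_self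

theorem append {m : ℕ} {l' : List ℕ} (h : IsZeck n l) (h' : IsZeck m l')
    (hgap : ∀ x ∈ l, ∀ y ∈ l'.head?, x + 2 ≤ y) : IsZeck (n + m) (l ++ l') := by
  refine ⟨fun i hi => ?_, ?_, ?_⟩
  · rcases List.mem_append.1 hi with hi | hi
    exacts [h.1 i hi, h'.1 i hi]
  · exact List.isChain_append.2
      ⟨h.2.1, h'.2.1, fun x hx => hgap x (List.mem_of_mem_getLast? hx)⟩
  · rw [List.map_append, List.sum_append, h.2.2, h'.2.2]

theorem fib_headI_add_le {m k : ℕ} {l' : List ℕ} (h : IsZeck m l) (h' : IsZeck (k + m) l')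
    (hk : k ≠ 0) (hlt : k < Nat.fib (l.headI - 1)) : Nat.fib l'.headI ≤ k := by
  have hzk := isZeck_reverse_zeckendorf k
  have hgap : ∀ x ∈ (Nat.zeckendorf k).reverse, ∀ y ∈ l.head?, x + 2 ≤ y := by
    intro x hx y hy
    obtain ⟨t, rfl⟩ := List.head?_eq_some_iff.1 hy
    have : x < y - 1 := lt_of_not_ge fun hle =>
      (hlt.trans_le (Nat.fib_mono hle)).not_ge (hzk.fib_le hx)
    omega
  obtain ⟨a, t, hk⟩ := List.exists_cons_of_ne_nil (hzk.ne_nil hk)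
  rw [h'.unique (hzk.append h hgap), hk, List.cons_append, List.headI_cons]
  exact hzk.fib_le (hk ▸ List.mem_cons_self)

end IsZeck

theorem z1_sub_le_two_mul_general (n k : ℕ) (ln lm : List ℕ)
    (hln : IsZeck n ln) (hlm : IsZeck (n - k) lm)
    (hk1 : 1 ≤ k) (hk2 : k < Nat.fib ln.headI) :
    Nat.fib lm.headI ≤ 2 * k := by
  by_contra! hlt
  have hnk : n - k ≠ 0 := by
    have := hlm.fib_headI_le
    omega
  obtain ⟨c, hc⟩ := Nat.exists_eq_add_of_le' (hlm.two_le_headI hnk)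
  have hk : k < Nat.fib (lm.headI - 1) := by
    rw [hc] at hlt ⊢
    have hfib : Nat.fib (c + 2) ≤ 2 * Nat.fib (c + 1) := by
      rw [Nat.fib_add_two, two_mul]
      exact Nat.add_le_add_right Nat.fib_le_fib_succ _
    change k < Nat.fib (c + 1)
    omega
  have hln' : IsZeck (k + (n - k)) ln := by
    rwa [Nat.add_sub_cancel' (hk2.le.trans hln.fib_headI_le)]
  exact (hlm.fib_headI_add_le hln' (by omega) hk).not_gt hk2

/-- Let `n > 1` and let `k` be an integer with `1 ≤ k < z₁(n)`.  Then `z₁(n - k) ≤ 2k`. -/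
theorem z1_sub_le_two_mul (n k : ℕ) (ln lm : List ℕ)
    (hln : IsZeck n ln) (hlm : IsZeck (n - k) lm)
    (hn : 1 < n) (hk1 : 1 ≤ k) (hk2 : k < Nat.fib ln.headI) :
    Nat.fib lm.headI ≤ 2 * k :=
  z1_sub_le_two_mul_general n k ln lm hln hlm hk1 hk2
end

section
/- For all natural numbers n, 𝒢(n) ≤ 𝒢(n + 1) ≤ 𝒢(n) + 1. -/
/-- The Grundy values of single-heap Fibonacci nim positions `(n, r)`, where `n` is the heap
size and `r` is the maximal number of tokens that may be removed on the next move: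
`grundy n r` is the least natural number not of the form
`grundy (n - k) (min (2 * k) (n - k))` for some `k` with `1 ≤ k ≤ min r n`.
In particular `grundy 0 r = 0` and `grundy n 0 = 0`. -/
noncomputable def grundy (n r : ℕ) : ℕ :=
  sInf {m : ℕ | ∀ k, 1 ≤ k → k ≤ min r n → grundy (n - k) (min (2 * k) (n - k)) ≠ m}
termination_by n
decreasing_by
  have : k ≤ n := le_trans ‹k ≤ min r n› (min_le_right _ _)
  omega

lemma grundy_eq (n r : ℕ) :
    grundy n r = sInf {m : ℕ | ∀ k, 1 ≤ k → k ≤ min r n →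
      grundy (n - k) (min (2 * k) (n - k)) ≠ m} := by
  rw [grundy]

/-- The Grundy value of a heap of size `n` is at most `n`. -/
lemma grundy_le_self : ∀ n r : ℕ, grundy n r ≤ n := by
  intro n
  induction n using Nat.strong_induction_on with
  | _ n ih =>
    intro r
    rw [grundy_eq]
    apply Nat.sInf_le
    intro k hk1 hk2
    have hkn : k ≤ n := le_trans hk2 (min_le_right _ _)
    have := ih (n - k) (by omega) (min (2 * k) (n - k))
    omega

lemma mem_grundy_self (n r : ℕ) :
    n ∈ {m : ℕ | ∀ k, 1 ≤ k → k ≤ min r n →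
      grundy (n - k) (min (2 * k) (n - k)) ≠ m} := by
  intro k hk1 hk2
  have hkn : k ≤ n := le_trans hk2 (min_le_right _ _)
  have := grundy_le_self (n - k) (min (2 * k) (n - k))
  omega

/-- Monotonicity of the Grundy value in the move cap `r`. -/
lemma grundy_mono_r (n : ℕ) {r r' : ℕ} (h : r ≤ r') : grundy n r ≤ grundy n r' := by
  rw [grundy_eq n r, grundy_eq n r']
  apply Nat.sInf_le
  have hmem := Nat.sInf_mem (⟨n, mem_grundy_self n r'⟩ :
    Set.Nonempty {m : ℕ | ∀ k, 1 ≤ k → k ≤ min r' n →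
      grundy (n - k) (min (2 * k) (n - k)) ≠ m})
  intro k hk1 hk2
  exact hmem k hk1 (le_trans hk2 (min_le_min h le_rfl))

/-- If `j` is below the Grundy value, some move achieves value `j`. -/
lemma exists_witness {n r j : ℕ} (h : j < grundy n r) :
    ∃ k, 1 ≤ k ∧ k ≤ min r n ∧ grundy (n - k) (min (2 * k) (n - k)) = j := by
  by_contra hcon
  push_neg at hcon
  have hj : j ∈ {m : ℕ | ∀ k, 1 ≤ k → k ≤ min r n →
      grundy (n - k) (min (2 * k) (n - k)) ≠ m} := by
    intro k hk1 hk2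
    exact hcon k hk1 hk2
  have := Nat.sInf_le hj
  rw [← grundy_eq] at this
  omega

/-- Key lemma: every value achieved by a move from `(n, n)` (indeed from any position with
heap `n`) is achieved "fully": there is `m < n` with `grundy m m = j` such that the move
from heap `n` to heap `m` already realizes the full value `grundy m m`. -/
lemma full_witness : ∀ n : ℕ, ∀ k j : ℕ, 1 ≤ k → k ≤ n →
    grundy (n - k) (min (2 * k) (n - k)) = j →
    ∃ m, m < n ∧ grundy m m = j ∧ grundy m (min (2 * (n - m)) m) = j := by
  intro n
  induction n using Nat.strong_induction_on with
  | _ n ih =>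
    intro k j hk1 hkn hopt
    set m₀ := n - k with hm₀
    have hm₀n : m₀ < n := by omega
    have hle : grundy m₀ (min (2 * k) m₀) ≤ grundy m₀ m₀ :=
      grundy_mono_r m₀ (min_le_right _ _)
    by_cases hj : grundy m₀ m₀ = j
    · refine ⟨m₀, hm₀n, hj, ?_⟩
      have : n - m₀ = k := by omega
      rw [this]
      exact hopt
    · have hlt : j < grundy m₀ m₀ := by
        rw [hopt] at hle
        omega
      obtain ⟨k₁, hk₁1, hk₁2, hk₁opt⟩ := exists_witness hlt
      have hk₁m₀ : k₁ ≤ m₀ := le_trans hk₁2 (min_le_right _ _)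
      obtain ⟨m, hm1, hm2, hm3⟩ := ih m₀ hm₀n k₁ j hk₁1 hk₁m₀ hk₁opt
      refine ⟨m, by omega, hm2, ?_⟩
      have h1 : grundy m (min (2 * (m₀ - m)) m) ≤ grundy m (min (2 * (n - m)) m) :=
        grundy_mono_r m (min_le_min (by omega) le_rfl)
      have h2 : grundy m (min (2 * (n - m)) m) ≤ grundy m m :=
        grundy_mono_r m (min_le_right _ _)
      omega

/-- The diagonal Grundy value is monotone from `n` to `n + 1`. -/
lemma grundy_diag_le_succ (n : ℕ) : grundy n n ≤ grundy (n + 1) (n + 1) := by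
  by_contra hcon
  push_neg at hcon
  set S := {m : ℕ | ∀ k, 1 ≤ k → k ≤ min (n + 1) (n + 1) →
    grundy (n + 1 - k) (min (2 * k) (n + 1 - k)) ≠ m} with hS
  have hSne : S.Nonempty := ⟨n + 1, mem_grundy_self (n + 1) (n + 1)⟩
  have hmem : grundy (n + 1) (n + 1) ∈ S := by
    rw [grundy_eq (n + 1) (n + 1)]
    exact Nat.sInf_mem hSne
  set j := grundy (n + 1) (n + 1) with hjdef
  have hjlt : j < grundy n n := hcon
  -- j is achieved by a move from (n, n)
  obtain ⟨k, hk1, hk2, hkopt⟩ := exists_witness hjlt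
  have hkn : k ≤ n := le_trans hk2 (min_le_right _ _)
  obtain ⟨m, hm1, hm2, hm3⟩ := full_witness n k j hk1 hkn hkopt
  -- the move from n+1 to m achieves j as well
  have h1 : grundy m (min (2 * (n - m)) m) ≤ grundy m (min (2 * (n + 1 - m)) m) :=
    grundy_mono_r m (min_le_min (by omega) le_rfl)
  have h2 : grundy m (min (2 * (n + 1 - m)) m) ≤ grundy m m :=
    grundy_mono_r m (min_le_right _ _)
  have hval : grundy m (min (2 * (n + 1 - m)) m) = j := by omega
  have := hmem (n + 1 - m) (by omega) (by omega)
  rw [show n + 1 - (n + 1 - m) = m from by omega] at this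
  exact this hval

lemma grundy_diag_mono : Monotone (fun n => grundy n n) :=
  monotone_nat_of_le_succ grundy_diag_le_succ

/-- For all natural numbers `n`, `𝒢(n) ≤ 𝒢(n + 1) ≤ 𝒢(n) + 1`, where `𝒢(n) = 𝒢(n, n)`. -/
theorem grundy_succ_between (n : ℕ) :
    grundy n n ≤ grundy (n + 1) (n + 1) ∧ grundy (n + 1) (n + 1) ≤ grundy n n + 1 := by
  refine ⟨grundy_diag_le_succ n, ?_⟩
  rw [grundy_eq (n + 1) (n + 1)]
  apply Nat.sInf_le
  intro k hk1 hk2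
  have hkn : k ≤ n + 1 := le_trans hk2 (min_le_right _ _)
  have h1 : grundy (n + 1 - k) (min (2 * k) (n + 1 - k)) ≤ grundy (n + 1 - k) (n + 1 - k) :=
    grundy_mono_r _ (min_le_right _ _)
  have h2 : grundy (n + 1 - k) (n + 1 - k) ≤ grundy n n :=
    grundy_diag_mono (by omega : n + 1 - k ≤ n)
  omega
end

section
/- If the positive integer n is not a Fibonacci number, then 𝒢(n, n) = 𝒢(n, n − 1). -/
open Nat

lemma fib_add_one_le_two_mul_fib {a : ℕ} (ha : a ≠ 0) : fib (a + 1) ≤ 2 * fib a := by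
  obtain ⟨b, rfl⟩ := exists_eq_succ_of_ne_zero ha
  rw [fib_add_two, two_mul]
  exact Nat.add_le_add_right fib_le_fib_succ _

lemma exists_fib_add_two_le_lt {n : ℕ} (hn : 0 < n) :
    ∃ a, fib (a + 2) ≤ n ∧ n < fib (a + 3) := by
  have h2 : 2 ≤ greatestFib n := le_greatestFib.2 (by rw [fib_two]; exact hn)
  refine ⟨greatestFib n - 2, ?_, ?_⟩
  · rw [Nat.sub_add_cancel h2]; exact fib_greatestFib_le n
  · rw [show greatestFib n - 2 + 3 = greatestFib n + 1 by omega]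
    exact lt_fib_greatestFib_add_one n

/-- The smallest part of the Zeckendorf representation of `n`. -/
def zeckendorfMin (n : ℕ) : ℕ :=
  if n = 0 then 0
  else if n = fib (greatestFib n) then n
  else zeckendorfMin (n - fib (greatestFib n))
termination_by n
decreasing_by
  have := fib_pos.2 (greatestFib_pos.2 (Nat.pos_of_ne_zero ‹n ≠ 0›))
  have := fib_greatestFib_le n
  omega

lemma zeckendorfMin_le (n : ℕ) : zeckendorfMin n ≤ n := by
  fun_induction zeckendorfMin n <;> omega

lemma zeckendorfMin_pos {n : ℕ} (hn : 0 < n) : 0 < zeckendorfMin n := by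
  fun_induction zeckendorfMin n with
  | case1 => omega
  | case2 => assumption
  | case3 n _ _ ih =>
    have := fib_greatestFib_le n
    exact ih (by omega)

lemma zeckendorfMin_lt_self {n : ℕ} (hn : ¬∃ j, fib j = n) : zeckendorfMin n < n := by
  fun_induction zeckendorfMin n with
  | case1 => exact absurd ⟨0, fib_zero⟩ hn
  | case2 n _ hfib => exact absurd ⟨_, hfib.symm⟩ hn
  | case3 n h0 _ _ =>
    have := zeckendorfMin_le (n - fib (greatestFib n))
    have := fib_pos.2 (greatestFib_pos.2 (Nat.pos_of_ne_zero h0))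
    omega

lemma zeckendorfMin_fib (j : ℕ) : zeckendorfMin (fib j) = fib j := by
  wlog hj : j ≠ 1
  · rw [not_not.1 hj, ← fib_two]; exact this 2 (by norm_num)
  rw [zeckendorfMin, greatestFib_fib hj]
  split_ifs <;> simp_all

lemma zeckendorfMin_of_fib_lt {g n : ℕ} (h₁ : fib g < n) (h₂ : n < fib (g + 1)) :
    zeckendorfMin n = zeckendorfMin (n - fib g) := by
  have hg : greatestFib n = g :=
    le_antisymm (Nat.lt_succ_iff.1 (greatestFib_lt.2 h₂)) (le_greatestFib.2 h₁.le)
  rw [zeckendorfMin, if_neg (by omega), hg, if_neg h₁.ne']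

lemma zeckendorfMin_sub_le_two_mul {n k : ℕ} (hk : 0 < k) (hkn : k < zeckendorfMin n) :
    zeckendorfMin (n - k) ≤ 2 * k := by
  induction n using Nat.strong_induction_on generalizing k with
  | _ n ih =>
  obtain ⟨a, hle, hlt⟩ :=
    exists_fib_add_two_le_lt (hk.trans (hkn.trans_le (zeckendorfMin_le n)))
  have h₂ : fib (a + 2) = fib a + fib (a + 1) := fib_add_two
  have h₃ : fib (a + 3) = fib (a + 1) + fib (a + 2) := fib_add_two
  rcases hle.eq_or_lt with rfl | hgt
  · rw [zeckendorfMin_fib] at hkn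
    rcases lt_or_ge k (fib a) with hka | hka
    · rw [zeckendorfMin_of_fib_lt (g := a + 1) (by omega)
          (show fib (a + 2) - k < fib (a + 2) by omega),
        show fib (a + 2) - k - fib (a + 1) = fib a - k by omega]
      exact ih (fib a) (by omega) hk (by rwa [zeckendorfMin_fib])
    · have ha : a ≠ 0 := by rintro rfl; simp at hkn; omega
      calc zeckendorfMin (fib (a + 2) - k) ≤ fib (a + 1) := (zeckendorfMin_le _).trans (by omega)
        _ ≤ 2 * fib a := fib_add_one_le_two_mul_fib ha
        _ ≤ 2 * k := by omega
  · rw [zeckendorfMin_of_fib_lt hgt hlt] at hkn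
    have := zeckendorfMin_le (n - fib (a + 2))
    rw [zeckendorfMin_of_fib_lt (g := a + 2) (by omega) (show n - k < fib (a + 3) by omega),
      Nat.sub_right_comm]
    exact ih _ (by omega) hk hkn

lemma two_mul_zeckendorfMin_lt {n : ℕ} (h : zeckendorfMin n < n) :
    2 * zeckendorfMin n < zeckendorfMin (n - zeckendorfMin n) := by
  induction n using Nat.strong_induction_on with
  | _ n ih =>
  obtain ⟨a, hle, hlt⟩ := exists_fib_add_two_le_lt ((zero_le _).trans_lt h)
  have h₂ : fib (a + 2) = fib a + fib (a + 1) := fib_add_two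
  have h₃ : fib (a + 3) = fib (a + 1) + fib (a + 2) := fib_add_two
  have hgt : fib (a + 2) < n :=
    hle.lt_of_ne (by rintro rfl; rw [zeckendorfMin_fib] at h; exact h.false)
  rw [zeckendorfMin_of_fib_lt hgt hlt] at h ⊢
  have hpos := zeckendorfMin_pos (n := n - fib (a + 2)) (by omega)
  rcases (zeckendorfMin_le (n - fib (a + 2))).lt_or_eq with hr | hr
  · rw [zeckendorfMin_of_fib_lt (n := n - zeckendorfMin (n - fib (a + 2))) (g := a + 2)
      (by omega) (show _ < fib (a + 3) by omega), Nat.sub_right_comm]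
    exact ih _ (by omega) hr
  · -- `n - fib (a + 2)` is a Fibonacci number below `fib (a + 1)`, hence at most `fib a`
    obtain ⟨j, hj⟩ : ∃ j, fib j = n - fib (a + 2) := by
      by_contra hnf; exact (zeckendorfMin_lt_self hnf).ne hr
    have hja : fib j ≤ fib a :=
      fib_mono (Nat.le_of_lt_succ (fib_mono.reflect_lt (show fib j < fib (a + 1) by omega)))
    rw [hr, show n - (n - fib (a + 2)) = fib (a + 2) by omega, zeckendorfMin_fib]
    omega

lemma grundy_le (n r : ℕ) : grundy n r ≤ n := by
  induction n using Nat.strong_induction_on generalizing r with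
  | _ n ih =>
  rw [grundy]
  refine Nat.sInf_le fun k hk₁ hk₂ => ?_
  have := ih (n - k) (by omega) (min (2 * k) (n - k))
  omega

lemma grundy_eq_zero_iff_forall_move_ne_zero {n r : ℕ} : grundy n r = 0 ↔
    ∀ k, 1 ≤ k → k ≤ min r n → grundy (n - k) (min (2 * k) (n - k)) ≠ 0 := by
  rw [grundy, Nat.sInf_eq_zero]
  refine ⟨fun h => h.resolve_right (Set.nonempty_iff_ne_empty.1 ⟨n, fun k hk₁ hk₂ => ?_⟩),
    Or.inl⟩
  have := grundy_le (n - k) (min (2 * k) (n - k))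
  omega

lemma grundy_eq_zero_iff {n r : ℕ} : grundy n r = 0 ↔ n = 0 ∨ r < zeckendorfMin n := by
  induction n using Nat.strong_induction_on generalizing r with
  | _ n ih =>
  have hmove : ∀ k, 1 ≤ k → k ≤ n → (grundy (n - k) (min (2 * k) (n - k)) ≠ 0 ↔
      k < n ∧ zeckendorfMin (n - k) ≤ 2 * k) := by
    intro k hk hkn
    rw [ne_eq, ih (n - k) (by omega)]
    have := zeckendorfMin_le (n - k)
    omega
  have hle := zeckendorfMin_le n
  rw [grundy_eq_zero_iff_forall_move_ne_zero]
  obtain rfl | hn := eq_or_ne n 0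
  · simp only [true_or, iff_true]
    omega
  rw [or_iff_right hn]
  constructor
  · intro h
    by_contra! hr
    have hpos := zeckendorfMin_pos (Nat.pos_of_ne_zero hn)
    obtain ⟨hlt, hsub⟩ := (hmove _ hpos hle).1 (h _ hpos (le_min hr hle))
    exact (two_mul_zeckendorfMin_lt hlt).not_ge hsub
  · intro hr k hk hkr
    exact (hmove k hk (by omega)).2 ⟨by omega, zeckendorfMin_sub_le_two_mul hk (by omega)⟩

lemma grundy_self_eq_grundy_pred_of_move_eq_zero {n k : ℕ} (hk : 1 ≤ k) (hkn : k < n)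
    (hzero : grundy (n - k) (min (2 * k) (n - k)) = 0) : grundy n n = grundy n (n - 1) := by
  rw [grundy, grundy]
  congr 1
  ext m
  refine ⟨fun h j hj hjn => h j hj (by omega), fun h j hj hjn => ?_⟩
  obtain hjn' | rfl := (hjn.trans (min_le_right _ _)).lt_or_eq
  · exact h j hj (by omega)
  · rw [Nat.sub_self, grundy_eq_zero_iff.2 (Or.inl rfl), ← hzero]
    exact h k hk (by omega)

/-- If the positive integer `n` is not a Fibonacci number, then `𝒢(n, n) = 𝒢(n, n - 1)`. -/
theorem grundy_self_eq_grundy_start (n : ℕ) (hn : 0 < n) (hfib : ¬ ∃ t, Nat.fib t = n) :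
    grundy n n = grundy n (n - 1) := by
  have hlt := zeckendorfMin_lt_self hfib
  refine grundy_self_eq_grundy_pred_of_move_eq_zero (zeckendorfMin_pos hn) hlt ?_
  exact grundy_eq_zero_iff.2 (Or.inr ((min_le_left _ _).trans_lt (two_mul_zeckendorfMin_lt hlt)))
end

section
/- Let g ≥ 1 be a natural number, let n be the least natural number with 𝒢(n) = g, and let m be the least natural number with 𝒢(m) = g + 1 (assuming both exist). Then 2(m − n) ≥ g. -/
/-!
If `𝒢(m) = g + 1`, some move from `m` removes `k` tokens and reaches a position of value `g`.
Since Grundy values grow with the move bound, `𝒢(m - k) ≥ g`; and every value not exceeding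
`𝒢(x)` already occurs on the diagonal at or below `x`, so minimality of `m` forces
`𝒢(m - k) = g`, whence `n ≤ m - k`. Finally a position with move bound `2k` has value at
most `2k`, so `g ≤ 2k ≤ 2(m - n)`.
-/

lemma grundy_options_nonempty (n r : ℕ) :
    {m : ℕ | ∀ k, 1 ≤ k → k ≤ min r n → grundy (n - k) (min (2 * k) (n - k)) ≠ m}.Nonempty := by
  refine ⟨(Finset.Icc 1 n).sup (fun k => grundy (n - k) (min (2 * k) (n - k))) + 1, ?_⟩
  intro k hk1 hk heq
  have : grundy (n - k) (min (2 * k) (n - k)) ≤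
      (Finset.Icc 1 n).sup (fun k => grundy (n - k) (min (2 * k) (n - k))) :=
    Finset.le_sup (f := fun k => grundy (n - k) (min (2 * k) (n - k)))
      (Finset.mem_Icc.mpr ⟨hk1, hk.trans (min_le_right _ _)⟩)
  omega

lemma grundy_move_ne {n r k : ℕ} (hk1 : 1 ≤ k) (hk : k ≤ min r n) :
    grundy (n - k) (min (2 * k) (n - k)) ≠ grundy n r := by
  conv_rhs => rw [grundy]
  exact Nat.sInf_mem (grundy_options_nonempty n r) k hk1 hk

lemma exists_move_grundy_eq_of_lt {n r v : ℕ} (hv : v < grundy n r) :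
    ∃ k, 1 ≤ k ∧ k ≤ min r n ∧ grundy (n - k) (min (2 * k) (n - k)) = v := by
  by_contra! hne
  rw [grundy] at hv
  exact hv.not_ge (Nat.sInf_le hne)

lemma grundy_mono_right (n : ℕ) : Monotone (grundy n) := by
  intro r r' hr
  conv_lhs => rw [grundy]
  exact Nat.sInf_le fun k hk1 hk => grundy_move_ne hk1 (hk.trans (min_le_min_right n hr))

lemma grundy_le_min (n r : ℕ) : grundy n r ≤ min r n := by
  classical
  have hsub : Finset.range (grundy n r) ⊆
      (Finset.Icc 1 (min r n)).image fun k => grundy (n - k) (min (2 * k) (n - k)) := by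
    intro v hv
    obtain ⟨k, hk1, hk, rfl⟩ := exists_move_grundy_eq_of_lt (Finset.mem_range.mp hv)
    exact Finset.mem_image.mpr ⟨k, Finset.mem_Icc.mpr ⟨hk1, hk⟩, rfl⟩
  simpa using (Finset.card_le_card hsub).trans Finset.card_image_le

lemma exists_le_grundy_self_eq {x v : ℕ} (hv : v ≤ grundy x x) : ∃ y ≤ x, grundy y y = v := by
  induction x using Nat.strong_induction_on with
  | _ x ih =>
    rcases hv.eq_or_lt with rfl | hlt
    · exact ⟨x, le_rfl, rfl⟩
    obtain ⟨k, hk1, hk, hmove⟩ := exists_move_grundy_eq_of_lt hlt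
    have hkx : k ≤ x := hk.trans (min_le_right _ _)
    have hvy : v ≤ grundy (x - k) (x - k) := hmove ▸ grundy_mono_right _ (min_le_right _ _)
    obtain ⟨y, hy, hyv⟩ := ih (x - k) (by omega) hvy
    exact ⟨y, by omega, hyv⟩

theorem grundy_first_occurrence_gap_general (g n m : ℕ)
    (hn : IsLeast {x : ℕ | grundy x x = g} n)
    (hm : IsLeast {x : ℕ | grundy x x = g + 1} m) :
    g ≤ 2 * (m - n) := by
  obtain ⟨k, hk1, hk, hmove⟩ :=
    exists_move_grundy_eq_of_lt (show g < grundy m m by rw [hm.1]; omega)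
  have hkm : k ≤ m := hk.trans (min_le_right _ _)
  have hge : g ≤ grundy (m - k) (m - k) := hmove ▸ grundy_mono_right _ (min_le_right _ _)
  have hle : grundy (m - k) (m - k) ≤ g := by
    by_contra! hgt
    obtain ⟨y, hy, hyg⟩ := exists_le_grundy_self_eq (Nat.succ_le_of_lt hgt)
    have := hm.2 hyg
    omega
  have hnk : n ≤ m - k := hn.2 (le_antisymm hle hge)
  have hg2k : g ≤ 2 * k := hmove ▸ (grundy_le_min _ _).trans ((min_le_left _ _).trans (min_le_left _ _))
  omega

/-- Let `g ≥ 1`, let `n` be the least natural number with `𝒢(n) = g`, and let `m` be the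
least natural number with `𝒢(m) = g + 1`.  Then `2(m - n) ≥ g`. -/
theorem grundy_first_occurrence_gap (g n m : ℕ) (hg : 1 ≤ g)
    (hn : IsLeast {x : ℕ | grundy x x = g} n)
    (hm : IsLeast {x : ℕ | grundy x x = g + 1} m) :
    g ≤ 2 * (m - n) :=
  grundy_first_occurrence_gap_general g n m hn hm
end
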